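/- (Corollary, no vertical spread arbitrage.) Let ω : ℝ → (0, ∞) be differentiable and suppose that for every κ ∈ ℝ, Φ(z₊(κ)) + φ(z₊(κ)) ω'(κ) ≥ 0, where z₊(κ) = (κ + ω(κ)²/2)/ω(κ). Then the put price slice P(κ) = exp κ · Φ(z₊(κ)) − Φ(z₋(κ)), with z₋(κ) = (κ − ω(κ)²/2)/ω(κ), is monotone nondecreasing on ℝ. -/

import Mathlib

open MeasureTheory Real

/-- Standard normal probability density function. -/
noncomputable def stdNormalPDF (z : ℝ) : ℝ := Real.exp (-z ^ 2 / 2) / Real.sqrt (2 * Real.pi)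

/-- Standard normal cumulative distribution function. -/
noncomputable def stdNormalCDF (z : ℝ) : ℝ := ∫ u in Set.Iic z, stdNormalPDF u

/-!
Differentiating `P` by the chain rule, the two density terms combine through the identity
`φ(z₋) = exp κ · φ(z₊)` (since `z₊² - z₋² = 2κ`) and `z₊ - z₋ = ω`, leaving
`P'(κ) = exp κ · (Φ(z₊) + φ(z₊) ω'(κ))`, which is nonnegative by hypothesis.
-/

theorem hasDerivAt_integral_Iic {E : Type*} [NormedAddCommGroup E] [NormedSpace ℝ E]
    [CompleteSpace E] {f : ℝ → E} (hf : Continuous f) (hfi : Integrable f) (z : ℝ) :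
    HasDerivAt (fun x => ∫ u in Set.Iic x, f u) (f z) z := by
  have hsplit : ∀ x, ∫ u in Set.Iic x, f u = (∫ u in Set.Iic 0, f u) + ∫ u in (0 : ℝ)..x, f u :=
    fun x => by
      rw [← intervalIntegral.integral_Iic_sub_Iic hfi.integrableOn hfi.integrableOn]
      abel
  rw [funext hsplit]
  exact (intervalIntegral.integral_hasDerivAt_right hfi.intervalIntegrable
    hf.stronglyMeasurable.stronglyMeasurableAtFilter hf.continuousAt).const_add _

theorem continuous_stdNormalPDF : Continuous stdNormalPDF := by
  unfold stdNormalPDF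
  fun_prop

theorem integrable_stdNormalPDF : Integrable stdNormalPDF := by
  convert (integrable_exp_neg_mul_sq (b := 1 / 2) (by norm_num)).div_const (√(2 * π)) using 2
  unfold stdNormalPDF
  ring_nf

theorem hasDerivAt_stdNormalCDF (z : ℝ) : HasDerivAt stdNormalCDF (stdNormalPDF z) z :=
  hasDerivAt_integral_Iic continuous_stdNormalPDF integrable_stdNormalPDF z

theorem stdNormalPDF_pivot_sub {w : ℝ} (hw : w ≠ 0) (κ : ℝ) :
    stdNormalPDF ((κ - w ^ 2 / 2) / w) = exp κ * stdNormalPDF ((κ + w ^ 2 / 2) / w) := by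
  unfold stdNormalPDF
  rw [← mul_div_assoc, ← exp_add]
  congr 2
  field_simp
  ring

noncomputable def putPrice (ω : ℝ → ℝ) (κ : ℝ) : ℝ :=
  exp κ * stdNormalCDF ((κ + ω κ ^ 2 / 2) / ω κ) - stdNormalCDF ((κ - ω κ ^ 2 / 2) / ω κ)

theorem hasDerivAt_putPrice {ω : ℝ → ℝ} {ω' κ : ℝ} (hω : HasDerivAt ω ω' κ) (hw : ω κ ≠ 0) :
    HasDerivAt (putPrice ω) (exp κ * (stdNormalCDF ((κ + ω κ ^ 2 / 2) / ω κ)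
      + stdNormalPDF ((κ + ω κ ^ 2 / 2) / ω κ) * ω')) κ := by
  have hzp := ((hasDerivAt_id' κ).add ((hω.pow 2).div_const 2)).div hω hw
  have hzm := ((hasDerivAt_id' κ).sub ((hω.pow 2).div_const 2)).div hω hw
  refine (((hasDerivAt_exp κ).mul ((hasDerivAt_stdNormalCDF _).comp κ hzp)).sub
    ((hasDerivAt_stdNormalCDF _).comp κ hzm)).congr_deriv ?_
  simp only [Function.comp_apply, Pi.div_apply, Pi.add_apply, Pi.sub_apply, Pi.pow_apply]
  rw [stdNormalPDF_pivot_sub hw]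
  field_simp
  ring

theorem no_vertical_spread_arbitrage (ω ω' : ℝ → ℝ)
    (hpos : ∀ κ, 0 < ω κ)
    (hderiv : ∀ κ, HasDerivAt ω (ω' κ) κ)
    (hvert : ∀ κ, 0 ≤ stdNormalCDF ((κ + ω κ ^ 2 / 2) / ω κ)
      + stdNormalPDF ((κ + ω κ ^ 2 / 2) / ω κ) * ω' κ) :
    Monotone (fun κ => Real.exp κ * stdNormalCDF ((κ + ω κ ^ 2 / 2) / ω κ)
      - stdNormalCDF ((κ - ω κ ^ 2 / 2) / ω κ)) :=
  monotone_of_hasDerivAt_nonneg (fun κ => hasDerivAt_putPrice (hderiv κ) (hpos κ).ne')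
    fun κ => mul_nonneg (exp_pos κ).le (hvert κ)
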